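/- Fix integers k ≥ 2 and d ≥ 1. The Choi state of the d-dimensional erasure channel with erasure probability 1−1/k, namely (1/k) Φ^d_{AB} + (1−1/k) (I_A/d) ⊗ |e⟩⟨e|_B, is k-extendible with respect to the partition A:B; an explicit k-extension is (1/k) Σ_{i=1}^k Φ^d_{AB_i} ⊗ (⊗_{j≠i} |e⟩⟨e|_{B_j}). -/

import Mathlib

open scoped Matrix Kronecker BigOperators ComplexOrder
open Matrix

attribute [local instance] Classical.propDecidable

noncomputable section

/-- A quantum state: a positive semidefinite complex matrix with unit trace. -/
def IsState {n : Type*} [Fintype n] (ρ : Matrix n n ℂ) : Prop :=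
  ρ.PosSemidef ∧ ρ.trace = 1

/-- The unitary permuting `k` copies of `B` according to a permutation `π ∈ S_k`. -/
def permMatrix (B : Type*) {k : ℕ} (π : Equiv.Perm (Fin k)) :
    Matrix (Fin k → B) (Fin k → B) ℂ :=
  Matrix.of fun f g => if f = g ∘ π then 1 else 0

/-- Partial trace over all `k` copies of `B` except the copy indexed by `i0`. -/
def marginalAt {A B : Type*} [Fintype B] {k : ℕ} (i0 : Fin k)
    (ω : Matrix (A × (Fin k → B)) (A × (Fin k → B)) ℂ) : Matrix (A × B) (A × B) ℂ :=
  Matrix.of fun p q =>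
    ∑ f : Fin k → B, if f i0 = p.2 then ω (p.1, f) (q.1, Function.update f i0 q.2) else 0

/-- `k`-extendibility of a bipartite state with respect to the partition `A : B`. -/
def IsKExtendible {A B : Type*} [Fintype A] [DecidableEq A] [Fintype B]
    {k : ℕ} (hk : 0 < k) (σ : Matrix (A × B) (A × B) ℂ) : Prop :=
  ∃ ω : Matrix (A × (Fin k → B)) (A × (Fin k → B)) ℂ,
    IsState ω ∧
    marginalAt ⟨0, hk⟩ ω = σ ∧
    ∀ π : Equiv.Perm (Fin k),
      ((1 : Matrix A A ℂ) ⊗ₖ permMatrix B π) * ω * ((1 : Matrix A A ℂ) ⊗ₖ permMatrix B π)ᴴ = ω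

/-- `k`-pure extendibility: the state is the marginal of a permutation-invariant pure state. -/
def IsKPureExtendible {A B : Type*} [Fintype A] [DecidableEq A] [Fintype B]
    {k : ℕ} (hk : 0 < k) (ρ : Matrix (A × B) (A × B) ℂ) : Prop :=
  ∃ ψ : (A × (Fin k → B)) → ℂ,
    (∑ x, Complex.normSq (ψ x)) = 1 ∧
    (∀ π : Equiv.Perm (Fin k),
      ((1 : Matrix A A ℂ) ⊗ₖ permMatrix B π) * Matrix.vecMulVec ψ (star ψ) *
        ((1 : Matrix A A ℂ) ⊗ₖ permMatrix B π)ᴴ = Matrix.vecMulVec ψ (star ψ)) ∧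
    marginalAt ⟨0, hk⟩ (Matrix.vecMulVec ψ (star ψ)) = ρ

/-- The maximally entangled state `(1/|T|) ∑_{i,j} |ii⟩⟨jj|` on `T ⊗ T`. -/
def maxEnt (T : Type*) [Fintype T] [DecidableEq T] : Matrix (T × T) (T × T) ℂ :=
  Matrix.of fun p q => if p.1 = p.2 ∧ q.1 = q.2 then ((Fintype.card T : ℂ))⁻¹ else 0

/-- Square root of a positive semidefinite matrix (junk value `0` off the PSD cone). -/
def psqrt {n : Type*} [Fintype n] [DecidableEq n] (A : Matrix n n ℂ) : Matrix n n ℂ :=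
  if h : A.PosSemidef then
    (h.1.eigenvectorUnitary : Matrix n n ℂ) *
      Matrix.diagonal (((↑) : ℝ → ℂ) ∘ Real.sqrt ∘ h.1.eigenvalues) *
      (star h.1.eigenvectorUnitary : Matrix n n ℂ)
  else 0

/-- Fidelity of states: `F(ρ,σ) = (Tr √(√σ ρ √σ))²`. -/
def fidelity {n : Type*} [Fintype n] [DecidableEq n] (ρ σ : Matrix n n ℂ) : ℝ :=
  ((psqrt (psqrt σ * ρ * psqrt σ)).trace).re ^ 2

/-- Partial trace over the second tensor factor. -/
def ptraceRight {α β : Type*} [Fintype β] (M : Matrix (α × β) (α × β) ℂ) :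
    Matrix α α ℂ :=
  Matrix.of fun a a' => ∑ b, M (a, b) (a', b)

/-- A twisting unitary `V = ∑_i I_A ⊗ |i⟩⟨i|_B ⊗ U^i_{A'B'}` (the shield system `S = A'B'`). -/
def IsTwistingUnitary {d : ℕ} {S : Type*} [Fintype S]
    (V : Matrix ((Fin d × Fin d) × S) ((Fin d × Fin d) × S) ℂ) : Prop :=
  ∃ U : Fin d → Matrix S S ℂ,
    (∀ i, (U i)ᴴ * U i = 1 ∧ U i * (U i)ᴴ = 1) ∧
    V = Matrix.of fun p q => if p.1 = q.1 then (U p.1.2) p.2 q.2 else 0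

/-- The privacy test `Π^γ = V (Φ^d ⊗ I) V†` associated with a twisting unitary `V`. -/
def privacyTest {d : ℕ} {S : Type*} [Fintype S] [DecidableEq S]
    (V : Matrix ((Fin d × Fin d) × S) ((Fin d × Fin d) × S) ℂ) :
    Matrix ((Fin d × Fin d) × S) ((Fin d × Fin d) × S) ℂ :=
  V * (maxEnt (Fin d) ⊗ₖ (1 : Matrix S S ℂ)) * Vᴴ

/-- A private state of `log₂ d` secret bits: `γ = V (Φ^d ⊗ τ) V†`. -/
def IsPrivateState {d : ℕ} {SA SB : Type*} [Fintype SA] [Fintype SB]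
    (γ : Matrix ((Fin d × Fin d) × (SA × SB)) ((Fin d × Fin d) × (SA × SB)) ℂ) : Prop :=
  ∃ (V : Matrix ((Fin d × Fin d) × (SA × SB)) ((Fin d × Fin d) × (SA × SB)) ℂ)
    (τ : Matrix (SA × SB) (SA × SB) ℂ),
    IsTwistingUnitary V ∧ IsState τ ∧ γ = V * (maxEnt (Fin d) ⊗ₖ τ) * Vᴴ

/-- The ε-hypothesis-testing relative entropy `D^ε_H(ρ‖σ)`. -/
def DH {n : Type*} [Fintype n] [DecidableEq n] (ε : ℝ) (ρ σ : Matrix n n ℂ) : ℝ :=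
  -Real.logb 2 (sInf { x : ℝ | ∃ Λ : Matrix n n ℂ, Λ.PosSemidef ∧
      ((1 : Matrix n n ℂ) - Λ).PosSemidef ∧
      1 - ε ≤ ((Λ * ρ).trace).re ∧ x = ((Λ * σ).trace).re })

/-- The `k`-unextendible hypothesis-testing divergence of a bipartite state. -/
def EHk {A B : Type*} [Fintype A] [DecidableEq A] [Fintype B] [DecidableEq B]
    {k : ℕ} (hk : 0 < k) (ε : ℝ) (ρ : Matrix (A × B) (A × B) ℂ) : ℝ :=
  sInf { x : ℝ | ∃ σ : Matrix (A × B) (A × B) ℂ, IsKExtendible hk σ ∧ x = DH ε ρ σ }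

/-- `id_R ⊗ Φ` applied entrywise via the blocks of `M`. -/
def tensorId {R n m : Type*} (Φ : Matrix n n ℂ → Matrix m m ℂ)
    (M : Matrix (R × n) (R × n) ℂ) : Matrix (R × m) (R × m) ℂ :=
  Matrix.of fun p q => Φ (Matrix.of fun i j => M (p.1, i) (q.1, j)) p.2 q.2

/-- `Φ ⊗ id_R` applied entrywise via the blocks of `M`. -/
def idTensor {R n m : Type*} (Φ : Matrix n n ℂ → Matrix m m ℂ)
    (M : Matrix (n × R) (n × R) ℂ) : Matrix (m × R) (m × R) ℂ :=
  Matrix.of fun p q => Φ (Matrix.of fun i j => M (i, p.2) (j, q.2)) p.1 q.1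

/-- Tensor product `E ⊗ F` of two maps on matrices. -/
def prodMap {A B A' B' : Type*} (E : Matrix A A ℂ → Matrix A' A' ℂ)
    (F : Matrix B B ℂ → Matrix B' B' ℂ)
    (M : Matrix (A × B) (A × B) ℂ) : Matrix (A' × B') (A' × B') ℂ :=
  idTensor E (tensorId F M)

/-- Linearity of a map on matrices. -/
def IsLinearMat {n m : Type*} (Φ : Matrix n n ℂ → Matrix m m ℂ) : Prop :=
  ∀ (c : ℂ) (M N : Matrix n n ℂ), Φ (c • M + N) = c • Φ M + Φ N

/-- Complete positivity of a linear map on matrices. -/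
def IsCPMap {n m : Type*} [Fintype n] [Fintype m] (Φ : Matrix n n ℂ → Matrix m m ℂ) : Prop :=
  IsLinearMat Φ ∧ ∀ (r : ℕ) (M : Matrix (Fin r × n) (Fin r × n) ℂ),
    M.PosSemidef → (tensorId Φ M).PosSemidef

/-- A quantum channel: a completely positive trace-preserving linear map. -/
def IsChannel {n m : Type*} [Fintype n] [Fintype m] (Φ : Matrix n n ℂ → Matrix m m ℂ) : Prop :=
  IsCPMap Φ ∧ ∀ M : Matrix n n ℂ, (Φ M).trace = M.trace

/-- A one-way LOCC channel `∑_x E^x ⊗ F^x` from `A ⊗ B` to `A' ⊗ B'`. -/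
def IsOneWayLOCC {A B A' B' : Type*} [Fintype A] [Fintype B] [Fintype A'] [Fintype B']
    (L : Matrix (A × B) (A × B) ℂ → Matrix (A' × B') (A' × B') ℂ) : Prop :=
  ∃ (m : ℕ) (E : Fin m → (Matrix A A ℂ → Matrix A' A' ℂ))
    (F : Fin m → (Matrix B B ℂ → Matrix B' B' ℂ)),
    (∀ x, IsCPMap (E x)) ∧
    (∀ M : Matrix A A ℂ, (∑ x, E x M).trace = M.trace) ∧
    (∀ x, IsChannel (F x)) ∧
    ∀ M, L M = ∑ x, prodMap (E x) (F x) M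

/-- The Choi state of a channel `N : A → B`. -/
def choiState {A B : Type*} [Fintype A] [DecidableEq A]
    (N : Matrix A A ℂ → Matrix B B ℂ) : Matrix (A × B) (A × B) ℂ :=
  tensorId N (maxEnt A)

/-- Hypothesis-testing divergence of channels: sup over reference systems and input states. -/
def chDivH {A B : Type*} [Fintype A] [Fintype B] [DecidableEq B] (ε : ℝ)
    (N M : Matrix A A ℂ → Matrix B B ℂ) : ℝ :=
  sSup { x : ℝ | ∃ (r : ℕ) (ρ : Matrix (Fin r × A) (Fin r × A) ℂ),
    IsState ρ ∧ x = DH ε (tensorId N ρ) (tensorId M ρ) }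

/-- The `k`-unextendible hypothesis-testing divergence of a channel. -/
def EHkCh {A B : Type*} [Fintype A] [DecidableEq A] [Fintype B] [DecidableEq B]
    {k : ℕ} (hk : 0 < k) (ε : ℝ) (N : Matrix A A ℂ → Matrix B B ℂ) : ℝ :=
  sInf { x : ℝ | ∃ M : Matrix A A ℂ → Matrix B B ℂ,
    IsChannel M ∧ IsKExtendible hk (choiState M) ∧ x = chDivH ε N M }

/-- Real power of a Hermitian matrix by functional calculus on its support
(zero eigenvalues are sent to zero; junk value `0` for non-Hermitian input). -/
def mpow {n : Type*} [Fintype n] [DecidableEq n] (A : Matrix n n ℂ) (r : ℝ) :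
    Matrix n n ℂ :=
  if hA : A.IsHermitian then
    (hA.eigenvectorUnitary : Matrix n n ℂ) *
      Matrix.diagonal (fun i =>
        if hA.eigenvalues i = 0 then (0 : ℂ) else ((hA.eigenvalues i ^ r : ℝ) : ℂ)) *
      (star hA.eigenvectorUnitary : Matrix n n ℂ)
  else 0

/-- The sandwiched Rényi relative entropy `D̃_α(ρ‖σ)`. -/
def sandwichedRenyi {n : Type*} [Fintype n] [DecidableEq n] (α : ℝ)
    (ρ σ : Matrix n n ℂ) : ℝ :=
  (α - 1)⁻¹ * Real.logb 2
    ((mpow (mpow σ ((1 - α) / (2 * α)) * ρ * mpow σ ((1 - α) / (2 * α))) α).trace).re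

/-- The `k`-unextendible sandwiched Rényi divergence of a bipartite state. -/
def sandEk {A B : Type*} [Fintype A] [DecidableEq A] [Fintype B] [DecidableEq B]
    {k : ℕ} (hk : 0 < k) (α : ℝ) (ρ : Matrix (A × B) (A × B) ℂ) : ℝ :=
  sInf { x : ℝ | ∃ σ : Matrix (A × B) (A × B) ℂ,
    IsKExtendible hk σ ∧ x = sandwichedRenyi α ρ σ }

/-- Sandwiched Rényi divergence of channels. -/
def sandDivCh {A B : Type*} [Fintype A] [Fintype B] [DecidableEq B] (α : ℝ)
    (N M : Matrix A A ℂ → Matrix B B ℂ) : ℝ :=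
  sSup { x : ℝ | ∃ (r : ℕ) (ρ : Matrix (Fin r × A) (Fin r × A) ℂ),
    IsState ρ ∧ x = sandwichedRenyi α (tensorId N ρ) (tensorId M ρ) }

/-- The `k`-unextendible sandwiched Rényi divergence of a channel. -/
def sandEkCh {A B : Type*} [Fintype A] [DecidableEq A] [Fintype B] [DecidableEq B]
    {k : ℕ} (hk : 0 < k) (α : ℝ) (N : Matrix A A ℂ → Matrix B B ℂ) : ℝ :=
  sInf { x : ℝ | ∃ M : Matrix A A ℂ → Matrix B B ℂ,
    IsChannel M ∧ IsKExtendible hk (choiState M) ∧ x = sandDivCh α N M }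

/-- The geometric Rényi relative entropy `D̂_α(ρ‖σ)` (`⊤` if `supp ρ ⊄ supp σ`). -/
def geomRenyi {n : Type*} [Fintype n] [DecidableEq n] (α : ℝ)
    (ρ σ : Matrix n n ℂ) : EReal :=
  if ∀ v : n → ℂ, σ.mulVec v = 0 → ρ.mulVec v = 0 then
    (((α - 1)⁻¹ * Real.logb 2
      ((σ * mpow (mpow σ (-(1 / 2)) * ρ * mpow σ (-(1 / 2))) α).trace).re : ℝ) : EReal)
  else ⊤

/-- Geometric Rényi divergence of channels. -/
def geomDivCh {A B : Type*} [Fintype A] [Fintype B] [DecidableEq B] (α : ℝ)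
    (N M : Matrix A A ℂ → Matrix B B ℂ) : EReal :=
  sSup { x : EReal | ∃ (r : ℕ) (ρ : Matrix (Fin r × A) (Fin r × A) ℂ),
    IsState ρ ∧ x = geomRenyi α (tensorId N ρ) (tensorId M ρ) }

/-- The `k`-unextendible geometric Rényi divergence of a channel. -/
def geomEkCh {A B : Type*} [Fintype A] [DecidableEq A] [Fintype B] [DecidableEq B]
    {k : ℕ} (hk : 0 < k) (α : ℝ) (N : Matrix A A ℂ → Matrix B B ℂ) : EReal :=
  sInf { x : EReal | ∃ M : Matrix A A ℂ → Matrix B B ℂ,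
    IsChannel M ∧ IsKExtendible hk (choiState M) ∧ x = geomDivCh α N M }

/-- The `n`-fold tensor power `ρ^{⊗n}` of a bipartite state, with the partition `A^n : B^n`. -/
def statePow {A B : Type*} (ρ : Matrix (A × B) (A × B) ℂ) (n : ℕ) :
    Matrix ((Fin n → A) × (Fin n → B)) ((Fin n → A) × (Fin n → B)) ℂ :=
  Matrix.of fun p q => ∏ i, ρ (p.1 i, p.2 i) (q.1 i, q.2 i)

/-- The `n`-fold tensor power `N^{⊗n}` of a channel. -/
def chTensorPow {A B : Type*} [Fintype A] [DecidableEq A]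
    (N : Matrix A A ℂ → Matrix B B ℂ) (n : ℕ)
    (M : Matrix (Fin n → A) (Fin n → A) ℂ) : Matrix (Fin n → B) (Fin n → B) ℂ :=
  Matrix.of fun f g => ∑ p : Fin n → A, ∑ q : Fin n → A,
    M p q * ∏ i, N (Matrix.single (p i) (q i) 1) (f i) (g i)

/-- The `d`-dimensional erasure channel with erasure probability `p`. -/
def erasureCh (d : ℕ) (p : ℝ) (ρ : Matrix (Fin d) (Fin d) ℂ) :
    Matrix (Fin (d + 1)) (Fin (d + 1)) ℂ :=
  Matrix.of fun i j =>
    if hi : (i : ℕ) < d then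
      (if hj : (j : ℕ) < d then ((1 - p : ℝ) : ℂ) * ρ ⟨i, hi⟩ ⟨j, hj⟩ else 0)
    else (if (j : ℕ) < d then 0 else (p : ℂ) * ρ.trace)

/-- `n`-fold product of the Bernoulli distribution `(x, y)` (`false ↦ x`, `true ↦ y`). -/
def bernProd (x y : ℝ) (n : ℕ) : (Fin n → Bool) → ℝ :=
  fun f => ∏ i, if f i then y else x

/-- The classical ε-hypothesis-testing relative entropy. -/
def DHclassical {X : Type*} [Fintype X] (ε : ℝ) (P Q : X → ℝ) : ℝ :=
  -Real.logb 2 (sInf { x : ℝ | ∃ t : X → ℝ,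
    (∀ i, 0 ≤ t i ∧ t i ≤ 1) ∧ 1 - ε ≤ ∑ i, t i * P i ∧ x = ∑ i, t i * Q i })

/-- Reordering `(X × K) × B ≃ K × (B × X)` used in forward-assisted protocols. -/
def protoReorder (X K B : Type*) : ((X × K) × B) ≃ (K × (B × X)) where
  toFun p := (p.1.2, (p.2, p.1.1))
  invFun q := ((q.2.2, q.1), q.2.1)
  left_inv _ := rfl
  right_inv _ := rfl

/-- The output of a one-shot forward-assisted secret-key protocol: the cq input state
`∑_x p_x |x⟩⟨x|_X ⊗ ρ^x_{A'A''A}` is sent through `id ⊗ N` and decoded by `D_{BX→B'B''}`. -/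
def protocolOutput {A B : Type*} {m d : ℕ} {SA SB : Type*}
    (N : Matrix A A ℂ → Matrix B B ℂ)
    (pr : Fin m → ℝ)
    (ρx : Fin m → Matrix ((Fin d × SA) × A) ((Fin d × SA) × A) ℂ)
    (D : Matrix (B × Fin m) (B × Fin m) ℂ → Matrix (Fin d × SB) (Fin d × SB) ℂ) :
    Matrix ((Fin d × SA) × (Fin d × SB)) ((Fin d × SA) × (Fin d × SB)) ℂ :=
  tensorId D (Matrix.reindex (protoReorder (Fin m) (Fin d × SA) B)
    (protoReorder (Fin m) (Fin d × SA) B)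
    (tensorId N (Matrix.of fun (p q : (Fin m × (Fin d × SA)) × A) =>
      if p.1.1 = q.1.1 then (pr p.1.1 : ℂ) * ρx p.1.1 (p.1.2, p.2) (q.1.2, q.2) else 0)))

/-- The Choi state of the `d`-dimensional erasure channel with erasure probability `1 - 1/k`:
`(1/k) Φ^d + (1 - 1/k)(I/d) ⊗ |e⟩⟨e|`. -/
def erasureChoi (d k : ℕ) : Matrix (Fin d × Fin (d + 1)) (Fin d × Fin (d + 1)) ℂ :=
  Matrix.of fun p q =>
    (k : ℂ)⁻¹ * ((d : ℂ)⁻¹ *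
      (if p.2 = Fin.castSucc p.1 ∧ q.2 = Fin.castSucc q.1 then 1 else 0)) +
    (1 - (k : ℂ)⁻¹) * ((d : ℂ)⁻¹ *
      (if p.1 = q.1 ∧ p.2 = Fin.last d ∧ q.2 = Fin.last d then 1 else 0))

/-- The explicit `k`-extension `(1/k) ∑_i Φ^d_{AB_i} ⊗ (⊗_{j≠i} |e⟩⟨e|_{B_j})`. -/
def erasureExt (d k : ℕ) :
    Matrix (Fin d × (Fin k → Fin (d + 1))) (Fin d × (Fin k → Fin (d + 1))) ℂ :=
  Matrix.of fun p q => (k : ℂ)⁻¹ * ∑ i : Fin k,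
    ((if p.2 i = Fin.castSucc p.1 ∧ q.2 i = Fin.castSucc q.1 then (d : ℂ)⁻¹ else 0) *
      ∏ j ∈ Finset.univ.erase i,
        (if p.2 j = Fin.last d ∧ q.2 j = Fin.last d then 1 else 0))

end

/-! The extension is `(1/(kd)) ∑ᵢ |vᵢ⟩⟨vᵢ|` with `vᵢ = ∑ₐ |a⟩_A ⊗ |a⟩_{Bᵢ} ⊗ |e⟩^{⊗(k-1)}`:
copy `i` of `B` holds the maximally entangled partner of `A` and every other copy holds the
erasure flag `|e⟩ = Fin.last d`. Being a positive combination of the `|vᵢ⟩⟨vᵢ|`, it is a state,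
and permuting the copies of `B` only permutes the `vᵢ`. Tracing out all copies but `i₀`, the
term `i = i₀` leaves `(1/k) Φ^d`, while each of the other `k - 1` terms leaves
`(1/(kd)) I ⊗ |e⟩⟨e|`; together this is the Choi state of the erasure channel with erasure
probability `1 - 1/k`. -/

open Function

section PermMatrix

variable {A B : Type*} [Fintype A] [DecidableEq A] [Fintype B] {k : ℕ}

lemma kronecker_permMatrix_mul_apply (π : Equiv.Perm (Fin k))
    (M : Matrix (A × (Fin k → B)) (A × (Fin k → B)) ℂ) (p q : A × (Fin k → B)) :
    (((1 : Matrix A A ℂ) ⊗ₖ permMatrix B π) * M) p q = M (p.1, p.2 ∘ π.symm) q := by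
  have hperm (g : Fin k → B) : p.2 = g ∘ π ↔ g = p.2 ∘ π.symm := by
    rw [← Equiv.comp_symm_eq, eq_comm]
  simp [Matrix.mul_apply, Fintype.sum_prod_type, permMatrix, Matrix.one_apply, hperm]

lemma mul_kronecker_permMatrix_conjTranspose_apply (π : Equiv.Perm (Fin k))
    (M : Matrix (A × (Fin k → B)) (A × (Fin k → B)) ℂ) (p q : A × (Fin k → B)) :
    (M * ((1 : Matrix A A ℂ) ⊗ₖ permMatrix B π)ᴴ) p q = M p (q.1, q.2 ∘ π.symm) := by
  have hperm (g : Fin k → B) : q.2 = g ∘ π ↔ g = q.2 ∘ π.symm := by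
    rw [← Equiv.comp_symm_eq, eq_comm]
  simp [Matrix.mul_apply, Fintype.sum_prod_type, permMatrix, Matrix.one_apply, hperm,
    apply_ite (starRingEnd ℂ), eq_comm]

lemma kronecker_permMatrix_conj_apply (π : Equiv.Perm (Fin k))
    (M : Matrix (A × (Fin k → B)) (A × (Fin k → B)) ℂ) (p q : A × (Fin k → B)) :
    (((1 : Matrix A A ℂ) ⊗ₖ permMatrix B π) * M * ((1 : Matrix A A ℂ) ⊗ₖ permMatrix B π)ᴴ) p q
      = M (p.1, p.2 ∘ π.symm) (q.1, q.2 ∘ π.symm) := by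
  rw [Matrix.mul_assoc, kronecker_permMatrix_mul_apply,
    mul_kronecker_permMatrix_conjTranspose_apply]

end PermMatrix

lemma choiState_apply {A B : Type*} [Fintype A] [DecidableEq A]
    (N : Matrix A A ℂ → Matrix B B ℂ) (a a' : A) (b b' : B) :
    choiState N (a, b) (a', b') = N (Matrix.single a a' (Fintype.card A : ℂ)⁻¹) b b' :=
  rfl

section Erasure

variable {d k : ℕ}

@[simp]
lemma erasureCh_castSucc_castSucc (p : ℝ) (ρ : Matrix (Fin d) (Fin d) ℂ) (x y : Fin d) :
    erasureCh d p ρ x.castSucc y.castSucc = ((1 - p : ℝ) : ℂ) * ρ x y := by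
  simp [erasureCh]

@[simp]
lemma erasureCh_castSucc_last (p : ℝ) (ρ : Matrix (Fin d) (Fin d) ℂ) (x : Fin d) :
    erasureCh d p ρ x.castSucc (Fin.last d) = 0 := by
  simp [erasureCh]

@[simp]
lemma erasureCh_last_castSucc (p : ℝ) (ρ : Matrix (Fin d) (Fin d) ℂ) (y : Fin d) :
    erasureCh d p ρ (Fin.last d) y.castSucc = 0 := by
  simp [erasureCh]

@[simp]
lemma erasureCh_last_last (p : ℝ) (ρ : Matrix (Fin d) (Fin d) ℂ) :
    erasureCh d p ρ (Fin.last d) (Fin.last d) = p * ρ.trace := by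
  simp [erasureCh]

lemma choiState_erasureCh : choiState (erasureCh d (1 - 1 / (k : ℝ))) = erasureChoi d k := by
  ext ⟨a, b⟩ ⟨a', b'⟩
  rw [choiState_apply]
  have hlast (x : Fin d) : Fin.last d ≠ x.castSucc := (Fin.castSucc_ne_last x).symm
  induction b using Fin.lastCases <;> induction b' using Fin.lastCases <;>
    simp [erasureChoi, Matrix.single_apply, hlast, eq_comm]
  rcases eq_or_ne a a' with rfl | h <;> simp [*]

def erasedExcept (i : Fin k) (a : Fin d) : Fin k → Fin (d + 1) :=
  update (fun _ => Fin.last d) i a.castSucc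

lemma eq_erasedExcept_iff (f : Fin k → Fin (d + 1)) (i : Fin k) (a : Fin d) :
    f = erasedExcept i a ↔ f i = a.castSucc ∧ ∀ j ≠ i, f j = Fin.last d :=
  eq_update_iff

lemma erasedExcept_self_apply (i : Fin k) (a : Fin d) : erasedExcept i a i = a.castSucc :=
  update_self _ _ _

lemma erasedExcept_apply_of_ne {i j : Fin k} (h : j ≠ i) (a : Fin d) :
    erasedExcept i a j = Fin.last d :=
  update_of_ne h _ _

lemma erasedExcept_comp_perm (σ : Equiv.Perm (Fin k)) (i : Fin k) (a : Fin d) :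
    erasedExcept (σ i) a ∘ σ = erasedExcept i a := by
  rw [erasedExcept, update_comp_equiv, Equiv.symm_apply_apply]
  rfl

lemma update_erasedExcept_self_eq_iff (i : Fin k) (a a' : Fin d) (b : Fin (d + 1)) :
    update (erasedExcept i a) i b = erasedExcept i a' ↔ b = a'.castSucc := by
  rw [erasedExcept, erasedExcept, update_idem, (update_injective _ i).eq_iff]

lemma update_erasedExcept_eq_iff {i j : Fin k} (h : j ≠ i) (a a' : Fin d) (b : Fin (d + 1)) :
    update (erasedExcept i a) j b = erasedExcept i a' ↔ b = Fin.last d ∧ a = a' := by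
  rw [update_eq_iff, erasedExcept_apply_of_ne h]
  refine and_congr_right fun _ => ⟨fun hx => ?_, fun ha x _ => ha ▸ rfl⟩
  simpa [erasedExcept] using hx i h.symm

def erasureVec (d : ℕ) (i : Fin k) : Fin d × (Fin k → Fin (d + 1)) → ℂ :=
  fun p => if p.2 = erasedExcept i p.1 then 1 else 0

lemma erasureVec_comp_perm (σ : Equiv.Perm (Fin k)) (i : Fin k)
    (p : Fin d × (Fin k → Fin (d + 1))) :
    erasureVec d i (p.1, p.2 ∘ σ) = erasureVec d (σ i) p := by
  simp only [erasureVec, ← erasedExcept_comp_perm σ i, σ.surjective.injective_comp_right.eq_iff]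

lemma erasureExt_eq_smul_sum :
    erasureExt d k = ((k : ℂ)⁻¹ * (d : ℂ)⁻¹) •
      ∑ i : Fin k, vecMulVec (erasureVec d i) (star (erasureVec d i)) := by
  ext p q
  simp only [erasureExt, of_apply, Matrix.smul_apply, Matrix.sum_apply, vecMulVec_apply,
    Finset.prod_boole, Pi.star_apply, erasureVec, eq_erasedExcept_iff, Finset.mem_erase]
  rw [smul_eq_mul, mul_assoc, Finset.mul_sum (a := (d : ℂ)⁻¹)]
  refine congrArg _ (Finset.sum_congr rfl fun i _ => ?_)
  split_ifs <;> simp_all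

lemma erasureExt_posSemidef : (erasureExt d k).PosSemidef := by
  rw [erasureExt_eq_smul_sum]
  refine PosSemidef.smul (posSemidef_sum _ fun i _ => posSemidef_vecMulVec_self_star _) ?_
  positivity

lemma erasureExt_trace (hk : k ≠ 0) (hd : d ≠ 0) : (erasureExt d k).trace = 1 := by
  rw [erasureExt_eq_smul_sum, trace_smul, trace_sum]
  simp [erasureVec, dotProduct, Fintype.sum_prod_type]
  field_simp

lemma erasureExt_apply_comp_perm (σ : Equiv.Perm (Fin k))
    (p q : Fin d × (Fin k → Fin (d + 1))) :
    erasureExt d k (p.1, p.2 ∘ σ) (q.1, q.2 ∘ σ) = erasureExt d k p q := by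
  simp only [erasureExt_eq_smul_sum, Matrix.smul_apply, Matrix.sum_apply, vecMulVec_apply,
    Pi.star_apply, erasureVec_comp_perm]
  rw [Equiv.sum_comp σ fun i => erasureVec d i p * star (erasureVec d i q)]

lemma erasureExt_conj_permMatrix (π : Equiv.Perm (Fin k)) :
    ((1 : Matrix (Fin d) (Fin d) ℂ) ⊗ₖ permMatrix (Fin (d + 1)) π) * erasureExt d k *
      ((1 : Matrix (Fin d) (Fin d) ℂ) ⊗ₖ permMatrix (Fin (d + 1)) π)ᴴ = erasureExt d k := by
  ext p q
  rw [kronecker_permMatrix_conj_apply, erasureExt_apply_comp_perm]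

lemma marginalAt_erasureExt_apply (i0 : Fin k) (a a' : Fin d) (b b' : Fin (d + 1)) :
    marginalAt i0 (erasureExt d k) (a, b) (a', b') = ∑ i : Fin k,
      if erasedExcept i a i0 = b ∧ update (erasedExcept i a) i0 b' = erasedExcept i a'
        then (k : ℂ)⁻¹ * (d : ℂ)⁻¹ else 0 := by
  simp only [marginalAt, erasureExt_eq_smul_sum, of_apply, Matrix.smul_apply, Matrix.sum_apply,
    vecMulVec_apply, Pi.star_apply, erasureVec, apply_ite (star : ℂ → ℂ), star_one, star_zero,
    ite_mul, one_mul, zero_mul, smul_eq_mul, Finset.mul_sum, Finset.ite_sum_zero]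
  rw [Finset.sum_comm]
  simp only [← ite_and, mul_ite, mul_zero, mul_one]
  simp only [and_left_comm (b := _ = erasedExcept _ _), ite_and (P := _ = erasedExcept _ _),
    Finset.sum_ite_eq', Finset.mem_univ, if_true]

lemma marginalAt_erasureExt (i0 : Fin k) : marginalAt i0 (erasureExt d k) = erasureChoi d k := by
  ext ⟨a, b⟩ ⟨a', b'⟩
  have hk : (k : ℂ) ≠ 0 := Nat.cast_ne_zero.2 (Fin.pos i0).ne'
  have hd : (d : ℂ) ≠ 0 := Nat.cast_ne_zero.2 (Fin.pos a).ne'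
  have hother : ∀ i ∈ ({i0}ᶜ : Finset (Fin k)),
      (if erasedExcept i a i0 = b ∧ update (erasedExcept i a) i0 b' = erasedExcept i a'
        then (k : ℂ)⁻¹ * (d : ℂ)⁻¹ else 0) =
      if a = a' ∧ b = Fin.last d ∧ b' = Fin.last d then (k : ℂ)⁻¹ * (d : ℂ)⁻¹ else 0 := by
    intro i hi
    have hne : i0 ≠ i := Ne.symm (by simpa using hi)
    simp only [erasedExcept_apply_of_ne hne, update_erasedExcept_eq_iff hne]
    exact if_congr (by tauto) rfl rfl
  rw [marginalAt_erasureExt_apply, Fintype.sum_eq_add_sum_compl i0, Finset.sum_congr rfl hother,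
    Finset.sum_const, Finset.card_compl, Finset.card_singleton, Fintype.card_fin, nsmul_eq_mul,
    Nat.cast_pred (Fin.pos i0)]
  simp only [erasedExcept_self_apply, update_erasedExcept_self_eq_iff, erasureChoi, of_apply,
    eq_comm (a := a.castSucc)]
  split_ifs <;> field_simp <;> ring

end Erasure

/-- The Choi state of the `d`-dimensional erasure channel with erasure
probability `1 - 1/k`, namely `(1/k)Φ^d + (1-1/k)(I/d) ⊗ |e⟩⟨e|`, is `k`-extendible, with
the explicit `k`-extension `(1/k) ∑_i Φ^d_{AB_i} ⊗ (⊗_{j≠i} |e⟩⟨e|_{B_j})`. -/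
theorem erasure_choi_kExtendible
    {k d : ℕ} (hk : 2 ≤ k) (hd : 1 ≤ d) :
    choiState (erasureCh d (1 - 1 / (k : ℝ))) = erasureChoi d k ∧
    IsState (erasureExt d k) ∧
    (∀ π : Equiv.Perm (Fin k),
      ((1 : Matrix (Fin d) (Fin d) ℂ) ⊗ₖ permMatrix (Fin (d + 1)) π) * erasureExt d k *
        ((1 : Matrix (Fin d) (Fin d) ℂ) ⊗ₖ permMatrix (Fin (d + 1)) π)ᴴ = erasureExt d k) ∧
    marginalAt (⟨0, by omega⟩ : Fin k) (erasureExt d k) = erasureChoi d k ∧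
    IsKExtendible (show 0 < k by omega) (erasureChoi d k) := by
  have hstate : IsState (erasureExt d k) :=
    ⟨erasureExt_posSemidef, erasureExt_trace (by omega) (by omega)⟩
  exact ⟨choiState_erasureCh, hstate, erasureExt_conj_permMatrix, marginalAt_erasureExt _,
    erasureExt d k, hstate, marginalAt_erasureExt _, erasureExt_conj_permMatrix⟩
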